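/- arXiv:math/0508323 — 4 statements merged into one kernel-verified Lean document; each statement's English description precedes it below -/
import Mathlib

section
/- Let G and G_0 be graphs, let p = td(G_0), and let c be a q-centered coloring of G where q ≥ p. Then any subgraph H of G isomorphic to G_0 receives at least p colors in the coloring c. -/
open scoped Classical

universe u v

/-- A rooted forest given by its ancestor order: `le x y` means `x` is an ancestor of `y`
(or `x = y`); ancestors of any vertex form a chain. -/
structure RootedForest (V : Type u) where
  le : V → V → Prop
  le_refl : ∀ x, le x x
  le_antisymm : ∀ x y, le x y → le y x → x = y
  le_trans : ∀ x y z, le x y → le y z → le x z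
  ancestors_chain : ∀ x y z, le x z → le y z → le x y ∨ le y x

/-- The closure of a rooted forest: each vertex is joined to all its proper ancestors. -/
def RootedForest.clos {V : Type u} (F : RootedForest V) : SimpleGraph V where
  Adj x y := x ≠ y ∧ (F.le x y ∨ F.le y x)
  symm := by
    constructor
    rintro x y ⟨h1, h2⟩
    exact ⟨h1.symm, h2.symm⟩
  loopless := ⟨fun x h => h.1 rfl⟩

/-- The height of a rooted forest: maximum number of vertices on a root-to-vertex path. -/
noncomputable def RootedForest.height {V : Type u} [Fintype V] (F : RootedForest V) : ℕ :=
  Finset.univ.sup fun x => (Finset.univ.filter fun y => F.le y x).card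

/-- Tree-depth: minimum height of a rooted forest whose closure contains `G`. -/
noncomputable def treeDepth {V : Type u} [Fintype V] (G : SimpleGraph V) : ℕ :=
  sInf {n : ℕ | ∃ F : RootedForest V, G ≤ F.clos ∧ F.height ≤ n}

/-- `H` is a `k`-tree: there is a construction order in which every vertex is added
adjacent to a clique of size at most `k` among the earlier vertices. -/
def IsKTree {V : Type u} (k : ℕ) (H : SimpleGraph V) : Prop :=
  ∃ r : V → V → Prop, IsStrictTotalOrder V r ∧
    ∀ x : V, H.IsClique {y | r y x ∧ H.Adj y x} ∧ {y | r y x ∧ H.Adj y x}.ncard ≤ k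

/-- Tree-width: minimum `k` such that `G` is a subgraph of a `k`-tree. -/
noncomputable def treeWidth {V : Type u} [Fintype V] (G : SimpleGraph V) : ℕ :=
  sInf {k : ℕ | ∃ H : SimpleGraph V, G ≤ H ∧ IsKTree k H}

/-- A `p`-centered coloring: every connected subgraph either has a color appearing
exactly once, or receives at least `p` colors. -/
def IsCenteredColoring {V : Type u} {α : Type v} (p : ℕ) (G : SimpleGraph V)
    (c : V → α) : Prop :=
  ∀ S : Set V, (G.induce S).Connected →
    (∃ x ∈ S, ∀ y ∈ S, c y = c x → y = x) ∨ p ≤ (c '' S).ncard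

/-- A class of (finite) graphs. -/
def GraphClass : Type 1 := ∀ (V : Type) [Fintype V], SimpleGraph V → Prop

def HasLowTreeWidthColorings (C : GraphClass) : Prop :=
  ∀ p : ℕ, 1 ≤ p → ∃ N : ℕ, ∀ (V : Type) [Fintype V], ∀ G : SimpleGraph V, C V G →
    ∃ c : V → Fin N, ∀ I : Finset (Fin N), I.card ≤ p →
      ∀ K : (G.induce {v | c v ∈ I}).ConnectedComponent,
        treeWidth ((G.induce {v | c v ∈ I}).induce K.supp) ≤ I.card - 1

def HasLowTreeDepthColorings (C : GraphClass) : Prop :=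
  ∀ p : ℕ, 1 ≤ p → ∃ N : ℕ, ∀ (V : Type) [Fintype V], ∀ G : SimpleGraph V, C V G →
    ∃ c : V → Fin N, ∀ I : Finset (Fin N), I.card ≤ p →
      ∀ K : (G.induce {v | c v ∈ I}).ConnectedComponent,
        treeDepth ((G.induce {v | c v ∈ I}).induce K.supp) ≤ I.card

/-- `χ_p(G)`: minimum number of colors such that any `i < p` color classes induce a
subgraph of tree-depth at most `i`. -/
noncomputable def chiP {V : Type u} [Fintype V] (p : ℕ) (G : SimpleGraph V) : ℕ :=
  sInf {N : ℕ | ∃ c : V → Fin N, ∀ I : Finset (Fin N), I.card < p →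
    treeDepth (G.induce {v | c v ∈ I}) ≤ I.card}

/-- `H` is a minor of `G`: disjoint connected branch sets, one per vertex of `H`,
joined by edges of `G` as prescribed by the edges of `H`. -/
def IsMinorOf {W : Type v} {V : Type u} (H : SimpleGraph W) (G : SimpleGraph V) : Prop :=
  ∃ B : W → Set V, (∀ w, (G.induce (B w)).Connected) ∧
    (Pairwise fun w w' => Disjoint (B w) (B w')) ∧
    ∀ w w', H.Adj w w' → ∃ u ∈ B w, ∃ x ∈ B w', G.Adj u x

/-- The Hadwiger number: largest `n` with `K_n` a minor of `G`. -/
noncomputable def hadwiger {V : Type u} [Fintype V] (G : SimpleGraph V) : ℕ :=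
  sSup {n : ℕ | IsMinorOf (⊤ : SimpleGraph (Fin n)) G}

/-- The grad `∇(G)`: maximum of `|E(H)|/|V(H)|` over minors `H` of `G`. -/
noncomputable def gradMax {V : Type u} [Fintype V] (G : SimpleGraph V) : ℝ :=
  sSup {x : ℝ | ∃ (W : Type) (_ : Finite W) (H : SimpleGraph W),
    IsMinorOf H G ∧ x = (H.edgeSet.ncard : ℝ) / (Nat.card W : ℝ)}

/-- The quotient of `G` by a family of balls. -/
def quotientGraph {V : Type u} (G : SimpleGraph V) {p : ℕ} (B : Fin p → Set V) :
    SimpleGraph (Fin p) where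
  Adj i j := i ≠ j ∧ ((B i ∩ B j).Nonempty ∨ ∃ u ∈ B i, ∃ x ∈ B j, G.Adj u x)
  symm := by
    constructor
    rintro i j ⟨hij, h⟩
    refine ⟨hij.symm, ?_⟩
    rcases h with h | ⟨u, hu, x, hx, huv⟩
    · exact Or.inl (by rwa [Set.inter_comm])
    · exact Or.inr ⟨x, hx, u, hu, huv.symm⟩
  loopless := ⟨fun i h => h.1 rfl⟩

/-- A family of balls of radius at most `r` and complexity at most `c`. -/
def IsBallFamily {V : Type u} (G : SimpleGraph V) (r c : ℕ) {p : ℕ}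
    (B : Fin p → Set V) : Prop :=
  (∀ i, (G.induce (B i)).Connected ∧
    ∃ x : B i, ∀ y : B i, (G.induce (B i)).dist x y ≤ r) ∧
  ∀ v : V, ({i | v ∈ B i} : Set (Fin p)).ncard ≤ c

/-- The grad `∇^c_r(G)` of `G` with rank `r` and complexity `c`. -/
noncomputable def gradCR {V : Type u} [Fintype V] (c r : ℕ) (G : SimpleGraph V) : ℝ :=
  sSup {x : ℝ | ∃ (p : ℕ) (B : Fin p → Set V), IsBallFamily G r c B ∧
    x = ((quotientGraph G B).edgeSet.ncard : ℝ) / (p : ℝ)}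

/-- The grad `∇_r(G)` of `G` with rank `r`. -/
noncomputable def gradR {V : Type u} [Fintype V] (r : ℕ) (G : SimpleGraph V) : ℝ :=
  gradCR 1 r G

def HasBoundedExpansion (C : GraphClass) : Prop :=
  ∃ f : ℕ → ℝ, ∀ (V : Type) [Fintype V], ∀ G : SimpleGraph V, C V G →
    ∀ r : ℕ, gradR r G ≤ f r

/-- The lexicographic product of two graphs. -/
def lexProd {V : Type u} {W : Type v} (G : SimpleGraph V) (H : SimpleGraph W) :
    SimpleGraph (V × W) where
  Adj a b := G.Adj a.1 b.1 ∨ (a.1 = b.1 ∧ H.Adj a.2 b.2)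
  symm := by
    constructor
    rintro a b (h | ⟨h1, h2⟩)
    · exact Or.inl h.symm
    · exact Or.inr ⟨h1.symm, h2.symm⟩
  loopless := by
    constructor
    rintro a (h | ⟨h1, h2⟩)
    · exact G.loopless.irrefl a.1 h
    · exact H.loopless.irrefl a.2 h2

/-- A loopless directed graph with at most one arc in each direction between two vertices. -/
structure Digr (V : Type u) where
  Adj : V → V → Prop
  irrefl : ∀ x, ¬ Adj x x

/-- The underlying simple graph of a digraph. -/
def Digr.toSimple {V : Type u} (D : Digr V) : SimpleGraph V where
  Adj x y := D.Adj x y ∨ D.Adj y x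
  symm := ⟨fun x y h => h.symm⟩
  loopless := ⟨fun x h => h.elim (D.irrefl x) (D.irrefl x)⟩

/-- Maximum indegree of a set of arcs (a binary relation). -/
noncomputable def inDegMax {V : Type u} [Fintype V] (R : V → V → Prop) : ℕ :=
  Finset.univ.sup fun y => (Finset.univ.filter fun x => R x y).card

def listArcs {V : Type u} (l : List V) : List (V × V) := l.zip l.tail

def internalVerts {V : Type u} (l : List V) : List V := l.tail.dropLast

/-- `l` is (the vertex list of) a directed path in `D`. -/
def IsDiPath {V : Type u} (D : Digr V) (l : List V) : Prop :=
  l ≠ [] ∧ l.Nodup ∧ l.Chain' D.Adj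

/-- `l` is a directed path in `D` from `x` to `z`. -/
def DiPathBetween {V : Type u} (D : Digr V) (l : List V) (x z : V) : Prop :=
  IsDiPath D l ∧ l.head? = some x ∧ l.getLast? = some z

/-- No internal vertex or arc of one path belongs to the other. -/
def SeparatedPair {V : Type u} (l1 l2 : List V) : Prop :=
  (∀ v ∈ internalVerts l1, v ∉ l2) ∧ (∀ v ∈ internalVerts l2, v ∉ l1) ∧
  ∀ e ∈ listArcs l1, e ∉ listArcs l2

/-- `y` is `(a,b)`-reachable from `x` in `D`. -/
def ABReachable {V : Type u} (D : Digr V) (a b : ℕ) (x y : V) : Prop :=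
  x ≠ y ∧ ∃ (z : V) (l1 l2 : List V),
    DiPathBetween D l1 x z ∧ DiPathBetween D l2 y z ∧
    l1.length ≤ a + 1 ∧ l2.length ≤ b + 1 ∧ SeparatedPair l1 l2

/-- `L` is an `(a,b)`-augmentation of `D`. -/
def IsAugmentation {V : Type u} (D : Digr V) (a b : ℕ) (L : V → V → Prop) : Prop :=
  ∀ x y, ABReachable D a b x y → L x y ∨ L y x

/-- `H` is a `1`-transitive fraternal augmentation of `D`. -/
def IsOneTFA {V : Type u} (D H : Digr V) : Prop :=
  (∀ x y, D.Adj x y → H.Adj x y) ∧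
  (∀ x y z, x ≠ y → D.Adj x z → D.Adj z y → H.Adj x y) ∧
  (∀ x y z, x ≠ y → D.Adj x z → D.Adj y z → H.Adj x y ∨ H.Adj y x)

/-- `Gs` (indexed from `1`) is a transitive fraternal augmentation of `D`. -/
def IsTFASeq {V : Type u} (D : Digr V) (Gs : ℕ → Digr V) : Prop :=
  Gs 1 = D ∧ ∀ i, 1 ≤ i → IsOneTFA (Gs i) (Gs (i + 1))

/-- `D` is an orientation of the graph `G`. -/
def IsOrientationOf {V : Type u} (D : Digr V) (G : SimpleGraph V) : Prop :=
  (∀ x y, D.Adj x y → ¬ D.Adj y x) ∧ D.toSimple = G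

/-- An acyclically oriented clique of size `p` in a digraph. -/
def AcyclicOrientedClique {V : Type u} (H : Digr V) (S : Set V) (p : ℕ) : Prop :=
  S.ncard = p ∧ (∀ x ∈ S, ∀ y ∈ S, x ≠ y → H.Adj x y ∨ H.Adj y x) ∧
  ∀ x : V, ¬ Relation.TransGen (fun a b => a ∈ S ∧ b ∈ S ∧ H.Adj a b) x x

/-!
If the copy of `G₀` receives fewer than `q` colours, every connected vertex set of `G₀` is
mapped by `f` to a connected set of `G` with fewer than `q` colours, hence contains a vertex
whose colour is unique in it. Build an elimination forest of `G₀`: in each component make such a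
vertex the root and recurse on the component minus its root. Two adjacent vertices stay in a
common component until one of them becomes a root, so `G₀` lies in the closure of the forest;
and each root's colour is unique in its component, so the ancestors of any vertex have
pairwise distinct colours and the height is at most the number of colours.
-/

namespace SimpleGraph

variable {V : Type*} (G : SimpleGraph V)

-- The component of `v` in `G[S]`; it is `{v}` when `v ∉ S`.
def componentIn (S : Set V) (v : V) : Set V :=
  ((G.induce S).spanningCoe.connectedComponentMk v).supp

variable {G} {S : Set V} {u v : V}

theorem spanningCoe_induce_adj :
    (G.induce S).spanningCoe.Adj u v ↔ u ∈ S ∧ v ∈ S ∧ G.Adj u v := by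
  simp only [spanningCoe, map_adj, Function.Embedding.subtype_apply, comap_adj,
    Subtype.exists]
  constructor
  · rintro ⟨u, hu, v, hv, h, rfl, rfl⟩
    exact ⟨hu, hv, h⟩
  · rintro ⟨hu, hv, h⟩
    exact ⟨u, hu, v, hv, h, rfl, rfl⟩

theorem mem_componentIn_self : v ∈ G.componentIn S v := rfl

theorem componentIn_eq_of_mem (hu : u ∈ G.componentIn S v) :
    G.componentIn S u = G.componentIn S v := by
  rw [componentIn, componentIn, (ConnectedComponent.mem_supp_iff _ _).1 hu]

theorem componentIn_subset (hv : v ∈ S) : G.componentIn S v ⊆ S := by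
  intro u hu
  obtain ⟨p⟩ := ConnectedComponent.exact ((ConnectedComponent.mem_supp_iff _ _).1 hu)
  cases p with
  | nil => exact hv
  | cons h _ => exact (spanningCoe_induce_adj.1 h).1

theorem mem_componentIn_of_adj (hu : u ∈ S) (hv : v ∈ S) (h : G.Adj u v) :
    u ∈ G.componentIn S v :=
  ConnectedComponent.sound (spanningCoe_induce_adj.2 ⟨hu, hv, h⟩).reachable

theorem connected_induce_componentIn (S : Set V) (v : V) :
    (G.induce (G.componentIn S v)).Connected :=
  (ConnectedComponent.connected_toSimpleGraph _).mono
    fun _ _ h => spanningCoe_induce_le G S h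

section ElimForest

variable (G) (ctr : ∀ C : Set V, C.Nonempty → C)

def elimRoot (S : Set V) (v : V) : V :=
  ctr (G.componentIn S v) ⟨v, mem_componentIn_self⟩

def elimRest (S : Set V) (v : V) : Set V :=
  G.componentIn S v \ {G.elimRoot ctr S v}

variable {G ctr}

theorem elimRoot_mem_componentIn : G.elimRoot ctr S v ∈ G.componentIn S v :=
  (ctr _ _).2

theorem elimRoot_eq_of_mem (hu : u ∈ G.componentIn S v) :
    G.elimRoot ctr S u = G.elimRoot ctr S v := by
  have ctr_congr : ∀ C C' (hC : C.Nonempty) (hC' : C'.Nonempty), C = C' →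
      (ctr C hC : V) = ctr C' hC' := by
    rintro C _ _ _ rfl
    rfl
  exact ctr_congr _ _ _ _ (componentIn_eq_of_mem hu)

theorem elimRest_eq_of_mem (hu : u ∈ G.componentIn S v) :
    G.elimRest ctr S u = G.elimRest ctr S v := by
  rw [elimRest, elimRest, componentIn_eq_of_mem hu, elimRoot_eq_of_mem hu]

theorem elimRest_subset (hv : v ∈ S) : G.elimRest ctr S v ⊆ S :=
  Set.sdiff_subset.trans (componentIn_subset hv)

theorem ncard_elimRest_lt [Finite V] (hv : v ∈ S) : (G.elimRest ctr S v).ncard < S.ncard :=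
  Set.ncard_lt_ncard <| (Set.sdiff_singleton_ssubset.2 elimRoot_mem_componentIn).trans_le
    (componentIn_subset hv)

variable (G ctr)

-- The ancestors of `v` (`v` included) in the elimination forest of `G[S]` rooting every
-- component `C` at `ctr C`.
noncomputable def elimAncestors [Finite V] (S : Set V) (v : V) : Set V :=
  if _ : v ∈ S then
    insert (G.elimRoot ctr S v) (elimAncestors (G.elimRest ctr S v) v)
  else ∅
termination_by S.ncard
decreasing_by exact ncard_elimRest_lt ‹_›

variable {G ctr} [Finite V]

theorem elimAncestors_of_mem (hv : v ∈ S) :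
    G.elimAncestors ctr S v =
      insert (G.elimRoot ctr S v) (G.elimAncestors ctr (G.elimRest ctr S v) v) := by
  rw [elimAncestors, dif_pos hv]

theorem elimAncestors_of_notMem (hv : v ∉ S) : G.elimAncestors ctr S v = ∅ := by
  rw [elimAncestors, dif_neg hv]

theorem elimAncestors_of_mem_componentIn (hv : v ∈ S) (hu : u ∈ G.componentIn S v) :
    G.elimAncestors ctr S u =
      insert (G.elimRoot ctr S v) (G.elimAncestors ctr (G.elimRest ctr S v) u) := by
  rw [elimAncestors_of_mem (componentIn_subset hv hu), elimRoot_eq_of_mem hu,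
    elimRest_eq_of_mem hu]

theorem mem_of_mem_elimAncestors (hu : u ∈ G.elimAncestors ctr S v) : v ∈ S := by
  by_contra hv
  rw [elimAncestors_of_notMem hv] at hu
  exact hu

theorem elimAncestors_subset (S : Set V) (v : V) : G.elimAncestors ctr S v ⊆ S := by
  by_cases hv : v ∈ S
  · rw [elimAncestors_of_mem hv]
    exact Set.insert_subset (componentIn_subset hv elimRoot_mem_componentIn)
      ((elimAncestors_subset _ v).trans (elimRest_subset hv))
  · simp [elimAncestors_of_notMem hv]
termination_by S.ncard
decreasing_by exact ncard_elimRest_lt hv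

theorem elimAncestors_subset_componentIn (S : Set V) (v : V) :
    G.elimAncestors ctr S v ⊆ G.componentIn S v := by
  by_cases hv : v ∈ S
  · rw [elimAncestors_of_mem hv]
    exact Set.insert_subset elimRoot_mem_componentIn
      ((elimAncestors_subset _ v).trans Set.sdiff_subset)
  · simp [elimAncestors_of_notMem hv]

theorem elimAncestors_elimRoot (hv : v ∈ S) :
    G.elimAncestors ctr S (G.elimRoot ctr S v) = {G.elimRoot ctr S v} := by
  rw [elimAncestors_of_mem_componentIn hv elimRoot_mem_componentIn,
    elimAncestors_of_notMem fun h => h.2 rfl, insert_empty_eq]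

theorem elimAncestors_elimRest_subset (hv : v ∈ S) (u : V) :
    G.elimAncestors ctr (G.elimRest ctr S v) u ⊆ G.elimAncestors ctr S u := by
  by_cases hu : u ∈ G.elimRest ctr S v
  · rw [elimAncestors_of_mem_componentIn hv hu.1]
    exact Set.subset_insert _ _
  · simp [elimAncestors_of_notMem hu]

theorem mem_elimAncestors_self {S : Set V} {v : V} (hv : v ∈ S) :
    v ∈ G.elimAncestors ctr S v := by
  rw [elimAncestors_of_mem hv]
  by_cases hvr : v = G.elimRoot ctr S v
  · exact Set.mem_insert_iff.2 (Or.inl hvr)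
  · exact Set.mem_insert_of_mem _ (mem_elimAncestors_self ⟨mem_componentIn_self, hvr⟩)
termination_by S.ncard
decreasing_by exact ncard_elimRest_lt hv

theorem elimAncestors_subset_of_mem {S : Set V} {u v : V}
    (hu : u ∈ G.elimAncestors ctr S v) :
    G.elimAncestors ctr S u ⊆ G.elimAncestors ctr S v := by
  have hv := mem_of_mem_elimAncestors hu
  rw [elimAncestors_of_mem hv] at hu ⊢
  rcases hu with rfl | hu
  · rw [elimAncestors_elimRoot hv]
    exact Set.singleton_subset_iff.2 (Set.mem_insert _ _)
  · rw [elimAncestors_of_mem_componentIn hv (elimAncestors_subset _ _ hu).1]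
    exact Set.insert_subset_insert (elimAncestors_subset_of_mem hu)
termination_by S.ncard
decreasing_by exact ncard_elimRest_lt hv

theorem elimAncestors_antisymm {S : Set V} {u v : V} (hu : u ∈ G.elimAncestors ctr S v)
    (hv' : v ∈ G.elimAncestors ctr S u) : u = v := by
  have hv := mem_of_mem_elimAncestors hu
  rw [elimAncestors_of_mem hv] at hu
  rcases hu with rfl | hu
  · rw [elimAncestors_elimRoot hv] at hv'
    exact hv'.symm
  · rw [elimAncestors_of_mem_componentIn hv (elimAncestors_subset _ _ hu).1] at hv'
    rcases hv' with hvr | hv'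
    · exact absurd hvr (mem_of_mem_elimAncestors hu).2
    · exact elimAncestors_antisymm hu hv'
termination_by S.ncard
decreasing_by exact ncard_elimRest_lt hv

theorem elimAncestors_chain {S : Set V} {u v w : V} (hu : u ∈ G.elimAncestors ctr S w)
    (hv : v ∈ G.elimAncestors ctr S w) :
    u ∈ G.elimAncestors ctr S v ∨ v ∈ G.elimAncestors ctr S u := by
  have hw := mem_of_mem_elimAncestors hu
  have huC := elimAncestors_subset_componentIn S w hu
  have hvC := elimAncestors_subset_componentIn S w hv
  rw [elimAncestors_of_mem hw] at hu hv
  rcases hu with rfl | hu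
  · left
    rw [elimAncestors_of_mem_componentIn hw hvC]
    exact Set.mem_insert _ _
  rcases hv with rfl | hv
  · right
    rw [elimAncestors_of_mem_componentIn hw huC]
    exact Set.mem_insert _ _
  exact (elimAncestors_chain hu hv).imp (fun h => elimAncestors_elimRest_subset hw _ h)
    (fun h => elimAncestors_elimRest_subset hw _ h)
termination_by S.ncard
decreasing_by exact ncard_elimRest_lt hw

theorem mem_elimAncestors_or_of_adj {S : Set V} {u v : V} (hu : u ∈ S) (hv : v ∈ S)
    (h : G.Adj u v) :
    u ∈ G.elimAncestors ctr S v ∨ v ∈ G.elimAncestors ctr S u := by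
  have huC := mem_componentIn_of_adj hu hv h
  by_cases hur : u = G.elimRoot ctr S v
  · left
    rw [elimAncestors_of_mem hv]
    exact Set.mem_insert_iff.2 (Or.inl hur)
  by_cases hvr : v = G.elimRoot ctr S v
  · right
    rw [elimAncestors_of_mem_componentIn hv huC]
    exact Set.mem_insert_iff.2 (Or.inl hvr)
  have hu' : u ∈ G.elimRest ctr S v := ⟨huC, hur⟩
  have hv' : v ∈ G.elimRest ctr S v := ⟨mem_componentIn_self, hvr⟩
  exact (mem_elimAncestors_or_of_adj hu' hv' h).imp
    (fun h => elimAncestors_elimRest_subset hv _ h)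
    (fun h => elimAncestors_elimRest_subset hv _ h)
termination_by S.ncard
decreasing_by exact ncard_elimRest_lt hv

theorem injOn_elimAncestors {α : Type*} {c : V → α} {S : Set V} {v : V}
    (hctr : ∀ C hC, (G.induce C).Connected → ∀ y ∈ C, c y = c (ctr C hC) → y = ctr C hC) :
    Set.InjOn c (G.elimAncestors ctr S v) := by
  by_cases hv : v ∈ S
  · rw [elimAncestors_of_mem hv,
      Set.injOn_insert fun h => (elimAncestors_subset _ _ h).2 rfl]
    refine ⟨injOn_elimAncestors hctr, ?_⟩
    rintro ⟨y, hy, hcy⟩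
    have hyR := elimAncestors_subset _ _ hy
    exact hyR.2 (hctr _ _ (connected_induce_componentIn S v) y hyR.1 hcy)
  · simp [elimAncestors_of_notMem hv]
termination_by S.ncard
decreasing_by exact ncard_elimRest_lt hv

variable (G ctr)

noncomputable def elimForest : RootedForest V where
  le u v := u ∈ G.elimAncestors ctr Set.univ v
  le_refl v := mem_elimAncestors_self (Set.mem_univ v)
  le_antisymm _ _ := elimAncestors_antisymm
  le_trans _ _ _ h h' := elimAncestors_subset_of_mem h' h
  ancestors_chain _ _ _ := elimAncestors_chain

theorem le_clos_elimForest : G ≤ (G.elimForest ctr).clos := fun _ _ h =>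
  ⟨h.ne, mem_elimAncestors_or_of_adj (Set.mem_univ _) (Set.mem_univ _) h⟩

end ElimForest

theorem height_elimForest_le {V : Type*} [Fintype V] (G : SimpleGraph V)
    (ctr : ∀ C : Set V, C.Nonempty → C) {α : Type*} {c : V → α}
    (hctr : ∀ C hC, (G.induce C).Connected → ∀ y ∈ C, c y = c (ctr C hC) → y = ctr C hC) :
    (G.elimForest ctr).height ≤ (Set.range c).ncard := by
  refine Finset.sup_le fun v _ => ?_
  calc (Finset.univ.filter fun u => u ∈ G.elimAncestors ctr Set.univ v).card
      = (G.elimAncestors ctr Set.univ v).ncard := by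
        rw [← Set.ncard_coe_finset]
        congr
        ext
        simp
    _ = (c '' G.elimAncestors ctr Set.univ v).ncard :=
        (injOn_elimAncestors hctr).ncard_image.symm
    _ ≤ (Set.range c).ncard := Set.ncard_le_ncard (Set.image_subset_range _ _)

theorem Connected.induce_image {V' : Type*} {G' : SimpleGraph V'} {s : Set V}
    (h : (G.induce s).Connected) (f : G →g G') : (G'.induce (f '' s)).Connected := by
  let φ : G.induce s →g G'.induce (f '' s) :=
    ⟨fun x => ⟨f x, Set.mem_image_of_mem f x.2⟩, fun hab => f.map_rel hab⟩
  refine h.map φ ?_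
  rintro ⟨_, x, hx, rfl⟩
  exact ⟨⟨x, hx⟩, rfl⟩

end SimpleGraph

theorem IsCenteredColoring.comp_hom {V V₀ α : Type*} {G : SimpleGraph V}
    {G₀ : SimpleGraph V₀} {p : ℕ} {c : V → α} (hc : IsCenteredColoring p G c)
    (f : G₀ →g G) (hf : Function.Injective f) : IsCenteredColoring p G₀ (c ∘ f) := by
  intro S hS
  rcases hc (f '' S) (hS.induce_image f) with ⟨_, ⟨x, hx, rfl⟩, huniq⟩ | hcard
  · exact Or.inl ⟨x, hx, fun y hy hcy => hf (huniq _ ⟨y, hy, rfl⟩ hcy)⟩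
  · rw [Set.image_comp]
    exact Or.inr hcard

theorem treeDepth_le_ncard_range_of_isCenteredColoring {V α : Type*} [Fintype V]
    {G : SimpleGraph V} {p : ℕ} {c : V → α} (hc : IsCenteredColoring p G c)
    (hp : (Set.range c).ncard < p) : treeDepth G ≤ (Set.range c).ncard := by
  have centre : ∀ C : Set V, C.Nonempty →
      ∃ x : C, (G.induce C).Connected → ∀ y ∈ C, c y = c x → y = x := by
    intro C hC
    by_cases hconn : (G.induce C).Connected
    · have hfew : ¬ p ≤ (c '' C).ncard := fun h =>
        (h.trans (Set.ncard_le_ncard (Set.image_subset_range c C))).not_gt hp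
      obtain ⟨x, hx, huniq⟩ := (hc C hconn).resolve_right hfew
      exact ⟨⟨x, hx⟩, fun _ => huniq⟩
    · exact ⟨⟨_, hC.some_mem⟩, fun h => absurd h hconn⟩
  choose ctr hctr using centre
  exact Nat.sInf_le
    ⟨G.elimForest ctr, G.le_clos_elimForest ctr, G.height_elimForest_le ctr hctr⟩

theorem stmt1_general {V V₀ α : Type} [Fintype V₀]
    (G : SimpleGraph V) (G₀ : SimpleGraph V₀) (q : ℕ) (hq : treeDepth G₀ ≤ q)
    (c : V → α) (hc : IsCenteredColoring q G c)
    (f : V₀ → V) (hf : Function.Injective f)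
    (hhom : ∀ u v, G₀.Adj u v → G.Adj (f u) (f v)) :
    treeDepth G₀ ≤ (c '' Set.range f).ncard := by
  by_cases hmany : q ≤ (c '' Set.range f).ncard
  · exact hq.trans hmany
  rw [← Set.range_comp] at hmany ⊢
  exact treeDepth_le_ncard_range_of_isCenteredColoring
    (hc.comp_hom ⟨f, hhom _ _⟩ hf) (not_le.1 hmany)

/-- Any subgraph of `G` isomorphic to `G₀` gets at least `td G₀` colors in a
`q`-centered coloring of `G`, `q ≥ td G₀`. -/
theorem stmt1 {V V₀ α : Type} [Fintype V] [Fintype V₀]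
    (G : SimpleGraph V) (G₀ : SimpleGraph V₀) (q : ℕ) (hq : treeDepth G₀ ≤ q)
    (c : V → α) (hc : IsCenteredColoring q G c)
    (f : V₀ → V) (hf : Function.Injective f)
    (hhom : ∀ u v, G₀.Adj u v → G.Adj (f u) (f v)) :
    treeDepth G₀ ≤ (c '' Set.range f).ncard :=
  stmt1_general G G₀ q hq c hc f hf hhom
end

section
/- Let p be an integer, let G be a graph, and let c be a p-centered coloring of G. Then for every i < p, the subgraph of G induced by the union of any i color classes of c has tree-depth at most i. -/
open scoped Classical

universe u v

/-! Induction on `n`, for colorings in which every connected set sees at most `n` colors and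
has a vertex of unique color. In each component choose such a vertex as root. A connected set
avoiding the roots lies in one component and misses the color of its root, so it sees at most
`n - 1` colors; the forest of height `n - 1` given by induction on the non-roots is hung below
the roots. A `p`-centered coloring restricted to `i < p` color classes is such a coloring with
`n = i`. -/

namespace SimpleGraph

variable {W : Type*} {G : SimpleGraph W}

theorem Connected.induce_image_val {A : Set W} {S : Set A} (h : ((G.induce A).induce S).Connected) :
    (G.induce (Subtype.val '' S)).Connected :=
  h.map ⟨fun x => ⟨x.1.1, x.1, x.2, rfl⟩, id⟩ <| by
    rintro ⟨_, w, hw, rfl⟩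
    exact ⟨⟨w, hw⟩, rfl⟩

theorem Connected.reachable_of_mem {S : Set W} (h : (G.induce S).Connected) {u v : W}
    (hu : u ∈ S) (hv : v ∈ S) : G.Reachable u v :=
  (h ⟨u, hu⟩ ⟨v, hv⟩).map (Embedding.induce S).toHom

end SimpleGraph

namespace RootedForest

variable {W : Type*}

theorem card_ancestors_le_height [Fintype W] (F : RootedForest W) (x : W) :
    (Finset.univ.filter fun y => F.le y x).card ≤ F.height :=
  Finset.le_sup (f := fun x => (Finset.univ.filter fun y => F.le y x).card) (Finset.mem_univ x)

theorem height_le_iff [Fintype W] (F : RootedForest W) {n : ℕ} :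
    F.height ≤ n ↔ ∀ x, (Finset.univ.filter fun y => F.le y x).card ≤ n := by
  simp [height, Finset.sup_le_iff]

/-- The vertices `r w` become roots, each on top of the trees of `F` containing the other
vertices `w` with the same `r w`. -/
def addRoots (r : W → W) (hr : ∀ w, r (r w) = r w) (F : RootedForest {w | w ≠ r w})
    (hF : ∀ a b, F.le a b → r a = r b) : RootedForest W where
  le u v := u = v ∨ u = r v ∨ ∃ hu hv, F.le ⟨u, hu⟩ ⟨v, hv⟩
  le_refl u := Or.inl rfl
  le_antisymm u v := by grind [F.le_antisymm]
  le_trans u v w := by grind [F.le_trans]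
  ancestors_chain u v w := by grind [F.ancestors_chain]

section addRoots

variable {r : W → W} {hr : ∀ w, r (r w) = r w} {F : RootedForest {w | w ≠ r w}}
  {hF : ∀ a b, F.le a b → r a = r b}

theorem eq_of_addRoots_le {u v : W} (h : (addRoots r hr F hF).le u v) : r u = r v := by
  grind [addRoots]

theorem height_addRoots_le [Fintype W] : (addRoots r hr F hF).height ≤ F.height + 1 := by
  refine (height_le_iff _).2 fun v => ?_
  by_cases hv : v = r v
  · calc _ ≤ ({v} : Finset W).card := Finset.card_le_card fun y hy => by grind [addRoots]
      _ ≤ F.height + 1 := by simp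
  · let A := Finset.univ.filter fun y => F.le y ⟨v, hv⟩
    calc _ ≤ (insert (r v) (A.image Subtype.val)).card := Finset.card_le_card fun y hy => by
          simp only [Finset.mem_filter, Finset.mem_univ, true_and] at hy
          rcases hy with rfl | rfl | ⟨hy, _, hyv⟩
          · exact Finset.mem_insert_of_mem
              (Finset.mem_image.2 ⟨⟨y, hv⟩, by simpa [A] using F.le_refl _, rfl⟩)
          · exact Finset.mem_insert_self _ _
          · exact Finset.mem_insert_of_mem
              (Finset.mem_image.2 ⟨⟨y, hy⟩, by simpa [A] using hyv, rfl⟩)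
      _ ≤ A.card + 1 := (Finset.card_insert_le _ _).trans (Nat.succ_le_succ Finset.card_image_le)
      _ ≤ F.height + 1 := Nat.succ_le_succ (F.card_ancestors_le_height _)

theorem le_clos_addRoots {H : SimpleGraph W} (hH : ∀ a b, H.Adj a b → r a = r b)
    (hHF : H.induce {w | w ≠ r w} ≤ F.clos) : H ≤ (addRoots r hr F hF).clos := by
  intro a b hab
  refine ⟨hab.ne, ?_⟩
  by_cases ha : a = r a
  · grind [addRoots]
  by_cases hb : b = r b
  · grind [addRoots]
  have hFab := (hHF (show (H.induce _).Adj ⟨a, ha⟩ ⟨b, hb⟩ from hab)).2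
  grind [addRoots]

end addRoots

end RootedForest

section Centered

variable {W α : Type*} {n : ℕ} {H : SimpleGraph W} {c : W → α}

def IsCenteredWithin (n : ℕ) (H : SimpleGraph W) (c : W → α) : Prop :=
  ∀ S : Set W, (H.induce S).Connected →
    (c '' S).ncard ≤ n ∧ ∃ x ∈ S, ∀ y ∈ S, c y = c x → y = x

theorem isCenteredWithin_induce_of_forall_subset {A : Set W}
    (h : ∀ T ⊆ A, (H.induce T).Connected →
      (c '' T).ncard ≤ n ∧ ∃ x ∈ T, ∀ y ∈ T, c y = c x → y = x) :
    IsCenteredWithin n (H.induce A) (c ∘ Subtype.val) := by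
  intro S hS
  obtain ⟨hn, _, ⟨x, hx, rfl⟩, hxu⟩ := h _ (by simp) hS.induce_image_val
  exact ⟨by rwa [Set.image_comp], x, hx,
    fun y hy hcy => Subtype.ext (hxu _ ⟨y, hy, rfl⟩ hcy)⟩

theorem IsCenteredColoring.isCenteredWithin_induce {p : ℕ} (hc : IsCenteredColoring p H c)
    {I : Finset α} (hI : I.card < p) :
    IsCenteredWithin I.card (H.induce {v | c v ∈ I}) (c ∘ Subtype.val) := by
  refine isCenteredWithin_induce_of_forall_subset fun T hTI hT => ?_
  have hcard : (c '' T).ncard ≤ I.card := by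
    simpa using Set.ncard_le_ncard (Set.image_subset_iff.2 hTI : c '' T ⊆ I)
  exact ⟨hcard, (hc T hT).resolve_right (by omega)⟩

theorem IsCenteredWithin.induce_ne_center [Finite W] (hc : IsCenteredWithin (n + 1) H c)
    {x : H.ConnectedComponent → W} (hxK : ∀ K, x K ∈ K.supp)
    (hx : ∀ K, ∀ y ∈ K.supp, c y = c (x K) → y = x K) :
    IsCenteredWithin n (H.induce {w | w ≠ x (H.connectedComponentMk w)}) (c ∘ Subtype.val) := by
  refine isCenteredWithin_induce_of_forall_subset fun T hTW hT => ⟨?_, (hc T hT).2⟩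
  obtain ⟨t, ht⟩ := hT.nonempty
  set K := H.connectedComponentMk t
  have hTK : ∀ u ∈ T, H.connectedComponentMk u = K := fun u hu =>
    SimpleGraph.ConnectedComponent.sound (hT.reachable_of_mem hu ht)
  -- the color of the center of `K` occurs in `K` only at the center, which is not in `T`
  have hcT : c '' T ⊆ c '' K.supp \ {c (x K)} := by
    rintro _ ⟨u, hu, rfl⟩
    refine ⟨⟨u, hTK u hu, rfl⟩, fun hcu => hTW hu ?_⟩
    rw [hTK u hu]
    exact hx K u (hTK u hu) hcu
  calc (c '' T).ncard ≤ (c '' K.supp \ {c (x K)}).ncard := Set.ncard_le_ncard hcT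
    _ = (c '' K.supp).ncard - 1 := Set.ncard_sdiff_singleton_of_mem ⟨x K, hxK K, rfl⟩
    _ ≤ n := by
      have := (hc K.supp (SimpleGraph.ConnectedComponent.maximal_connected_induce_supp K).1).1
      omega

open SimpleGraph RootedForest in
theorem IsCenteredWithin.exists_rootedForest [Fintype W] (hc : IsCenteredWithin n H c) :
    ∃ F : RootedForest W, H ≤ F.clos ∧ F.height ≤ n ∧
      ∀ u v, F.le u v → H.Reachable u v := by
  induction n generalizing W with
  | zero =>
    have : IsEmpty W := ⟨fun w => by
      simpa using (hc {w} ((connected_iff _).2 ⟨.of_subsingleton, ⟨⟨w, rfl⟩⟩⟩)).1⟩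
    refine ⟨⟨Eq, Eq.refl, fun _ _ h _ => h, fun _ _ _ => Eq.trans,
      fun _ _ _ h h' => .inl (h.trans h'.symm)⟩, fun a => isEmptyElim a,
      (height_le_iff _).2 isEmptyElim, fun u => isEmptyElim u⟩
  | succ n ih =>
    choose x hxK hx using fun K : H.ConnectedComponent =>
      (hc K.supp (ConnectedComponent.maximal_connected_induce_supp K).1).2
    set r : W → W := fun w => x (H.connectedComponentMk w)
    have hrK : ∀ w, H.connectedComponentMk (r w) = H.connectedComponentMk w := fun w => hxK _
    have hr : ∀ w, r (r w) = r w := fun w => congrArg x (hrK w)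
    have hr_eq : ∀ u v, H.Reachable u v → r u = r v := fun u v h =>
      congrArg x (ConnectedComponent.sound h)
    obtain ⟨F, hHF, hFh, hFr⟩ := ih (hc.induce_ne_center hxK hx)
    have hF : ∀ a b, F.le a b → r a = r b := fun a b h =>
      hr_eq _ _ ((hFr a b h).map (Embedding.induce _).toHom)
    refine ⟨addRoots r hr F hF, le_clos_addRoots (fun a b h => hr_eq a b h.reachable) hHF,
      height_addRoots_le.trans (by omega), fun u v h => ?_⟩
    have hu := ConnectedComponent.exact (hrK u)
    have hv := ConnectedComponent.exact (hrK v)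
    exact hu.symm.trans (eq_of_addRoots_le h ▸ hv)

end Centered

/-- In a `p`-centered coloring, any `i < p` color classes induce a subgraph of
tree-depth at most `i`. -/
theorem stmt2 {V α : Type} [Fintype V] (p : ℕ) (G : SimpleGraph V) (c : V → α)
    (hc : IsCenteredColoring p G c) (I : Finset α) (hI : I.card < p) :
    treeDepth (G.induce {v | c v ∈ I}) ≤ I.card := by
  obtain ⟨F, hGF, hF, -⟩ := (hc.isCenteredWithin_induce hI).exists_rootedForest
  exact Nat.sInf_le ⟨F, hGF, hF⟩
end

section
/- Let C be a class of graphs having low tree-width colorings and let p be an integer. Then there exists an integer X(p) such that every graph in C has a p-centered coloring using at most X(p) colors. -/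
open scoped Classical

universe u v

/-!
A graph of tree-width at most `t` is a subgraph of a `t`-tree, whose construction order `r` has
cliques as sets of earlier neighbours. Let `depth x` be one more than the least depth of an earlier
neighbour of `x`. Along an edge the depth changes by at most one, and each layer `depth = a` is a
`(t - 1)`-tree, since the earlier neighbour realising the depth of `x` lies in the previous layer.
Color `x` by `depth x mod (p + 1)` and, inductively, by a `p`-centered coloring of its layer. A
connected set `S` then either meets `p` consecutive layers, or its vertices of least depth `a`
induce a connected subgraph, on which the layer coloring applies: deleting the `r`-last vertex `z`
of `S` keeps `S` connected because the earlier neighbours of `z` form a clique, and if `z` has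
depth `a`, each of its neighbours in `S` is adjacent to an earlier neighbour of `z` of depth
`a - 1`, so it has depth `a` too.

For the theorem, take a low tree-width coloring `c` for `p + 1` classes. For every set `I` of fewer
than `p` colors, the components of the subgraph induced by `c⁻¹ I` have tree-width at most `p - 2`
and so get bounded `p`-centered colorings. Pair `c` with all these colorings: a connected set that
sees fewer than `p` colors lies inside `c⁻¹ I` for the set `I` of its colors.
-/

open SimpleGraph Set Function

section CenteredColoring

variable {V α β : Type*} {p : ℕ}

def IsCenteredOn (p : ℕ) (c : V → α) (S : Set V) : Prop :=
  (∃ x ∈ S, ∀ y ∈ S, c y = c x → y = x) ∨ p ≤ (c '' S).ncard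

namespace IsCenteredOn

variable {c : V → α} {S : Set V}

lemma congr {c' : V → α} (h : IsCenteredOn p c S) (hc : EqOn c c' S) : IsCenteredOn p c' S := by
  rw [IsCenteredOn, ← image_congr hc]
  refine h.imp (fun ⟨x, hx, hu⟩ => ⟨x, hx, fun y hy hxy => hu y hy ?_⟩) id
  rwa [hc hx, hc hy]

lemma of_comp [Finite V] {f : α → β} (h : IsCenteredOn p (f ∘ c) S) : IsCenteredOn p c S := by
  refine h.imp (fun ⟨x, hx, hu⟩ => ⟨x, hx, fun y hy hxy => hu y hy (congrArg f hxy)⟩) fun hp => ?_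
  rw [image_comp] at hp
  exact hp.trans (ncard_image_le (toFinite _))

lemma of_subset [Finite V] {T : Set V} (h : IsCenteredOn p c T) (hTS : T ⊆ S)
    (hT : ∀ x ∈ T, ∀ y ∈ S, c y = c x → y ∈ T) : IsCenteredOn p c S :=
  h.imp (fun ⟨x, hx, hu⟩ => ⟨x, hTS hx, fun y hy hxy => hu y (hT x hx y hy hxy) hxy⟩)
    fun hp => hp.trans (ncard_le_ncard (image_mono hTS) (toFinite _))

end IsCenteredOn

namespace IsCenteredColoring

variable {G : SimpleGraph V} {c : V → α}

lemma mono {G' : SimpleGraph V} (hle : G ≤ G') (h : IsCenteredColoring p G' c) :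
    IsCenteredColoring p G c :=
  fun S hS => h S (hS.mono (fun _ _ h => hle h))

lemma comp_equiv [Finite V] (h : IsCenteredColoring p G c) (e : α ≃ β) :
    IsCenteredColoring p G (e ∘ c) := fun S hS =>
  IsCenteredOn.of_comp (f := e.symm) (by rw [← comp_assoc, e.symm_comp_self, id_comp]; exact h S hS)

lemma exists_extend [Nonempty α] {s : Set V} {d : s → α}
    (h : IsCenteredColoring p (G.induce s) d) :
    ∃ c : V → α, IsCenteredColoring p (G.induce s) (c ∘ Subtype.val) :=
  ⟨extend Subtype.val d fun _ => Classical.arbitrary α, by rwa [extend_comp Subtype.val_injective]⟩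

lemma isCenteredOn {s S : Set V} (h : IsCenteredColoring p (G.induce s) (c ∘ Subtype.val))
    (hSs : S ⊆ s) (hS : (G.induce S).Connected) : IsCenteredOn p c S := by
  have hS' : ((G.induce s).induce (Subtype.val ⁻¹' S)).Connected :=
    hS.map ⟨fun x : S => ⟨⟨x, hSs x.2⟩, x.2⟩, id⟩ fun ⟨⟨x, _⟩, hx⟩ => ⟨⟨x, hx⟩, rfl⟩
  rcases h _ hS' with ⟨x, hx, hu⟩ | hp
  · exact Or.inl ⟨x, hx, fun y hy hxy => congrArg Subtype.val (hu ⟨y, hSs hy⟩ hy hxy)⟩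
  · right
    rwa [image_comp, Subtype.image_preimage_coe, inter_eq_right.2 hSs] at hp

lemma of_connectedComponent (e : G.ConnectedComponent → V → α)
    (he : ∀ K, IsCenteredColoring p (G.induce K.supp) (e K ∘ Subtype.val)) :
    IsCenteredColoring p G fun v => e (G.connectedComponentMk v) v := by
  intro S hS
  obtain ⟨⟨x, hx⟩⟩ := hS.nonempty
  have hSK : S ⊆ (G.connectedComponentMk x).supp := fun y hy =>
    ConnectedComponent.sound ((hS.preconnected ⟨y, hy⟩ ⟨x, hx⟩).map (Embedding.induce S).toHom)
  refine ((he _).isCenteredOn hSK hS).congr fun y hy => ?_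
  rw [show G.connectedComponentMk y = _ from hSK hy]

end IsCenteredColoring

lemma isCenteredColoring_prod_of_forall_card_lt {ι : Type*} [Finite V] {G : SimpleGraph V}
    (c : V → ι) (e : {I : Finset ι // I.card < p} → V → α)
    (he : ∀ I, IsCenteredColoring p (G.induce {v | c v ∈ I.1}) (e I ∘ Subtype.val)) :
    IsCenteredColoring p G fun v => (c v, fun I => e I v) := by
  intro S hS
  by_cases hbig : p ≤ ((fun v => (c v, fun I => e I v)) '' S).ncard
  · exact Or.inr hbig
  have hcS : (c '' S).ncard < p := by
    rw [show c = Prod.fst ∘ fun v => (c v, fun I => e I v) from rfl, image_comp]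
    exact (ncard_image_le (toFinite _)).trans_lt (not_le.1 hbig)
  let I : {I : Finset ι // I.card < p} :=
    ⟨(toFinite (c '' S)).toFinset, by rwa [← ncard_eq_toFinset_card _ (toFinite _)]⟩
  have hSI : S ⊆ {v | c v ∈ I.1} := fun v hv => (Finite.mem_toFinset _).2 (mem_image_of_mem c hv)
  exact IsCenteredOn.of_comp (f := fun q => q.2 I) ((he I).isCenteredOn hSI hS)

end CenteredColoring

lemma SimpleGraph.Reachable.exists_apply_eq {V : Type*} {G : SimpleGraph V} {f : V → ℕ}
    (hf : ∀ x y, G.Adj x y → f y ≤ f x + 1) {u v : V} (huv : G.Reachable u v) {m : ℕ}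
    (hu : f u ≤ m) (hv : m ≤ f v) : ∃ w, f w = m := by
  by_contra! hne
  obtain ⟨W⟩ := huv
  obtain ⟨d, -, hd₁, hd₂⟩ :=
    W.exists_boundary_dart {w | f w < m} (lt_of_le_of_ne hu (hne u)) (not_lt.2 hv)
  have := hf _ _ d.adj
  have h₁ : f d.fst < m := hd₁
  have h₂ : ¬ f d.snd < m := hd₂
  exact hne d.snd (by omega)

lemma Nat.eq_of_mod_eq_of_lt_add {x y m : ℕ} (h : x % m = y % m) (hxy : x < y + m)
    (hyx : y < x + m) : x = y := by
  have h₁ := Nat.sub_mod_eq_zero_of_mod_eq h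
  have h₂ := Nat.sub_mod_eq_zero_of_mod_eq h.symm
  rw [Nat.mod_eq_of_lt (by omega)] at h₁ h₂
  omega

lemma Set.Nonempty.exists_forall_ne_rel {V : Type*} [Finite V] {r : V → V → Prop}
    [IsStrictTotalOrder V r] {S : Set V} (hS : S.Nonempty) : ∃ z ∈ S, ∀ x ∈ S, x ≠ z → r x z := by
  obtain ⟨z, hzS, hz⟩ := (Finite.wellFounded_of_trans_of_irrefl (swap r)).has_min S hS
  refine ⟨z, hzS, fun x hx hxz => ?_⟩
  rcases trichotomous_of r x z with h | rfl | h
  · exact h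
  · exact absurd rfl hxz
  · exact absurd h (hz x hx)

section KTree

variable {V : Type*} {H : SimpleGraph V} {k : ℕ}

lemma IsKTree.mono {k' : ℕ} (h : IsKTree k H) (hk : k ≤ k') : IsKTree k' H :=
  let ⟨r, hr, hH⟩ := h
  ⟨r, hr, fun x => ⟨(hH x).1, (hH x).2.trans hk⟩⟩

lemma IsKTree.eq_bot [Finite V] (h : IsKTree 0 H) : H = ⊥ := by
  obtain ⟨r, hr, hH⟩ := h
  have hempty : ∀ x y, r y x → ¬ H.Adj y x := fun x y hyx hadj => by
    have := (ncard_eq_zero (toFinite _)).1 (Nat.le_zero.1 (hH x).2)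
    exact this.subset ⟨hyx, hadj⟩
  ext x y
  simp only [bot_adj, iff_false]
  intro hadj
  rcases trichotomous_of r x y with hxy | rfl | hxy
  · exact hempty y x hxy hadj
  · exact hadj.ne rfl
  · exact hempty x y hxy hadj.symm

lemma isKTree_top [Fintype V] : IsKTree (Fintype.card V) (⊤ : SimpleGraph V) :=
  ⟨WellOrderingRel, inferInstance, fun _ =>
    ⟨fun _ _ _ _ h => h, (ncard_le_card _).trans_eq Nat.card_eq_fintype_card⟩⟩

lemma exists_isKTree_of_treeWidth_le [Fintype V] {G : SimpleGraph V} (h : treeWidth G ≤ k) :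
    ∃ H, G ≤ H ∧ IsKTree k H :=
  let ⟨H, hGH, hH⟩ := Nat.sInf_mem (s := {k | ∃ H, G ≤ H ∧ IsKTree k H}) ⟨_, ⊤, le_top, isKTree_top⟩
  ⟨H, hGH, hH.mono h⟩

end KTree

section EliminationOrder

variable {V : Type*} (G : SimpleGraph V) (r : V → V → Prop)

def backNbhd (x : V) : Set V := {y | r y x ∧ G.Adj y x}

variable {G r} in
lemma connected_induce_sdiff_singleton_of_isClique (hG : ∀ x, G.IsClique (backNbhd G r x))
    {S : Set V} {z : V} (hS : (G.induce S).Connected) (hz : z ∈ S)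
    (hmax : ∀ x ∈ S, x ≠ z → r x z) (hne : (S \ {z}).Nonempty) :
    (G.induce (S \ {z})).Connected := by
  obtain ⟨x₀, hx₀S, hx₀z⟩ := hne
  have : Nontrivial S := ⟨⟨z, hz⟩, ⟨x₀, hx₀S⟩, fun h => hx₀z (congrArg Subtype.val h).symm⟩
  obtain ⟨⟨b, hbS⟩, hzb⟩ := hS.preconnected.exists_adj_of_nontrivial ⟨z, hz⟩
  replace hzb : G.Adj z b := hzb
  have hback : ∀ x ∈ S, G.Adj z x → x ∈ backNbhd G r z := fun x hx h => ⟨hmax x hx h.ne', h.symm⟩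
  have hb : ∀ y : ↥(S \ {z}), G.Adj z y → (G.induce (S \ {z})).Reachable ⟨b, hbS, hzb.ne'⟩ y := by
    rintro ⟨y, hyS, hyz⟩ hzy
    rcases eq_or_ne b y with rfl | hby
    · rfl
    · exact Adj.reachable (hG z (hback b hbS hzb) (hback y hyS hzy) hby)
  let f : S → ↥(S \ {z}) := fun x => if hx : x.1 = z then ⟨b, hbS, hzb.ne'⟩ else ⟨x, x.2, hx⟩
  have hf : ∀ x y : S, (G.induce S).Adj x y → (G.induce (S \ {z})).Reachable (f x) (f y) := by
    rintro ⟨x, hxS⟩ ⟨y, hyS⟩ hxy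
    by_cases hx : x = z <;> by_cases hy : y = z <;> simp only [f, hx, hy, dif_pos]
    · rfl
    · exact hb ⟨y, hyS, hy⟩ (hx ▸ hxy)
    · exact (hb ⟨x, hxS, hx⟩ (hy ▸ hxy.symm)).symm
    · exact Adj.reachable (G := G.induce (S \ {z})) (u := ⟨x, hxS, hx⟩) (v := ⟨y, hyS, hy⟩) hxy
  have : Nonempty ↥(S \ {z}) := ⟨⟨x₀, hx₀S, hx₀z⟩⟩
  refine ⟨?_⟩
  rintro ⟨x, hxS, hxz⟩ ⟨y, hyS, hyz⟩
  have key : ∀ u v : S,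
      (G.induce S).Reachable u v → (G.induce (S \ {z})).Reachable (f u) (f v) := by
    rintro u v ⟨W⟩
    induction W with
    | nil => rfl
    | cons h _ ih => exact (hf _ _ h).trans ih
  simpa [f, dif_neg (show x ≠ z from hxz), dif_neg (show y ≠ z from hyz)] using
    key _ _ (hS.preconnected ⟨x, hxS⟩ ⟨y, hyS⟩)

variable [IsWellFounded V r]

/-- `sInf ∅ = 0` gives depth `0` to the vertices without earlier neighbours. -/
noncomputable def depth : V → ℕ :=
  IsWellFounded.fix r fun x depth => sInf (range fun y : backNbhd G r x => depth y y.2.1 + 1)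

lemma depth_eq (x : V) :
    depth G r x = sInf (range fun y : backNbhd G r x => depth G r y + 1) :=
  IsWellFounded.fix_eq _ _ _

variable {G r} {x y : V}

lemma depth_le_of_mem_backNbhd (hy : y ∈ backNbhd G r x) : depth G r x ≤ depth G r y + 1 := by
  rw [depth_eq]
  exact Nat.sInf_le ⟨⟨y, hy⟩, rfl⟩

lemma exists_mem_backNbhd_depth_eq (hx : (backNbhd G r x).Nonempty) :
    ∃ y ∈ backNbhd G r x, depth G r x = depth G r y + 1 := by
  have := hx.to_subtype
  obtain ⟨⟨y, hy⟩, hxy⟩ := depth_eq G r x ▸ Nat.sInf_mem (range_nonempty _)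
  exact ⟨y, hy, hxy.symm⟩

variable [Std.Trichotomous r]

lemma depth_le_of_mem_backNbhd_of_isClique (hG : ∀ x, G.IsClique (backNbhd G r x))
    (hy : y ∈ backNbhd G r x) : depth G r y ≤ depth G r x + 1 := by
  induction x using IsWellFounded.induction r generalizing y with
  | _ x ih =>
  obtain ⟨w, hw, hxw⟩ := exists_mem_backNbhd_depth_eq ⟨y, hy⟩
  rcases eq_or_ne y w with rfl | hyw
  · omega
  have hadj := hG x hy hw hyw
  rcases trichotomous_of r y w with hyw' | rfl | hwy
  · have := ih w hw.1 ⟨hyw', hadj⟩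
    omega
  · exact absurd rfl hyw
  · have := depth_le_of_mem_backNbhd (⟨hwy, hadj.symm⟩ : w ∈ backNbhd G r y)
    omega

lemma depth_le_of_adj (hG : ∀ x, G.IsClique (backNbhd G r x)) (h : G.Adj x y) :
    depth G r y ≤ depth G r x + 1 := by
  rcases trichotomous_of r x y with hxy | rfl | hyx
  · exact depth_le_of_mem_backNbhd ⟨hxy, h⟩
  · exact absurd rfl h.ne
  · exact depth_le_of_mem_backNbhd_of_isClique hG ⟨hyx, h.symm⟩

end EliminationOrder

section Layers

variable {V : Type*} {G : SimpleGraph V} {r : V → V → Prop}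
variable [Finite V] [IsStrictTotalOrder V r] [IsWellFounded V r]

lemma connected_induce_inter_depth_eq (hG : ∀ x, G.IsClique (backNbhd G r x)) {a : ℕ}
    {S : Set V} (hS : (G.induce S).Connected) (hmin : ∀ v ∈ S, a ≤ depth G r v)
    (ha : (S ∩ {v | depth G r v = a}).Nonempty) :
    (G.induce (S ∩ {v | depth G r v = a})).Connected := by
  induction S using WellFoundedLT.induction with
  | _ S ih =>
  obtain ⟨z, hzS, hmax⟩ := (ha.mono inter_subset_left).exists_forall_ne_rel (r := r)
  set L := {v | depth G r v = a}
  rcases (S \ {z} ∩ L).eq_empty_or_nonempty with hT' | hT'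
  · have huniq : ∀ x ∈ S ∩ L, x = z := fun x hx =>
      by_contra fun hxz => (eq_empty_iff_forall_notMem.1 hT') x ⟨⟨hx.1, hxz⟩, hx.2⟩
    obtain ⟨v, hv⟩ := ha
    rw [eq_singleton_iff_unique_mem.2 ⟨huniq v hv ▸ hv, huniq⟩, induce_singleton_eq_top]
    exact connected_top
  have hconn := ih _ (sdiff_singleton_ssubset.2 hzS)
    (connected_induce_sdiff_singleton_of_isClique hG hS hzS hmax (hT'.mono inter_subset_left))
    (fun v hv => hmin v hv.1) hT'
  rw [← inter_sdiff_right_comm] at hT' hconn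
  by_cases hz : z ∈ L
  · obtain ⟨x, ⟨hxS, -⟩, hxz⟩ := hT'
    have : Nontrivial S := ⟨⟨z, hzS⟩, ⟨x, hxS⟩, fun h => hxz (congrArg Subtype.val h).symm⟩
    obtain ⟨⟨y, hyS⟩, hzy⟩ := hS.preconnected.exists_adj_of_nontrivial ⟨z, hzS⟩
    replace hzy : G.Adj z y := hzy
    have hy : y ∈ backNbhd G r z := ⟨hmax y hyS hzy.ne', hzy.symm⟩
    obtain ⟨w, hw, hzw⟩ := exists_mem_backNbhd_depth_eq ⟨y, hy⟩
    have hza : depth G r z = a := hz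
    have hya := hmin y hyS
    have hyw : y ≠ w := by rintro rfl; omega
    have := depth_le_of_adj hG (hG z hy hw hyw).symm
    have hyL : y ∈ (S ∩ L) \ {z} := ⟨⟨hyS, show depth G r y = a by omega⟩, hzy.ne'⟩
    rw [← insert_eq_of_mem (show z ∈ S ∩ L from ⟨hzS, hz⟩), ← insert_sdiff_singleton, insert_eq]
    exact connected_induce_union (by rw [induce_singleton_eq_top]; exact preconnected_top)
      hconn.preconnected (mem_singleton z) hyL hzy
  · rwa [sdiff_singleton_eq_self fun h => hz h.2] at hconn

lemma isKTree_induce_depth_eq {k : ℕ} (hG : ∀ x, G.IsClique (backNbhd G r x))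
    (hk : ∀ x, (backNbhd G r x).ncard ≤ k + 1) (a : ℕ) :
    IsKTree k (G.induce {v | depth G r v = a}) := by
  refine ⟨Subrel r _, (Subrel.relEmbedding _ _).isStrictTotalOrder, fun x =>
    ⟨fun y hy y' hy' hyy' => hG x hy hy' fun h => hyy' (Subtype.ext h), ?_⟩⟩
  set B := {y | Subrel r _ y x ∧ (G.induce {v | depth G r v = a}).Adj y x}
  have hB : Subtype.val '' B ⊆ backNbhd G r x := by
    rintro _ ⟨y, hy, rfl⟩
    exact hy
  rw [← ncard_image_of_injective B Subtype.val_injective]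
  rcases (backNbhd G r x).eq_empty_or_nonempty with hx | hx
  · rw [hx, subset_empty_iff] at hB
    simp [hB]
  obtain ⟨w, hw, hxw⟩ := exists_mem_backNbhd_depth_eq hx
  have hwB : w ∉ Subtype.val '' B := by
    rintro ⟨y, -, rfl⟩
    have : depth G r y = a := y.2
    have : depth G r x = a := x.2
    omega
  have := ncard_lt_ncard (ssubset_of_subset_of_ne hB fun h => hwB (h ▸ hw)) (toFinite _)
  have := hk x
  omega

lemma isCenteredColoring_depth {α : Type*} {p : ℕ} (hG : ∀ x, G.IsClique (backNbhd G r x))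
    (e : ℕ → V → α)
    (he : ∀ a, IsCenteredColoring p (G.induce {v | depth G r v = a}) (e a ∘ Subtype.val)) :
    IsCenteredColoring p G fun v =>
      ((⟨depth G r v % (p + 1), Nat.mod_lt _ p.succ_pos⟩ : Fin (p + 1)), e (depth G r v) v) := by
  set c := fun v => ((⟨depth G r v % (p + 1), Nat.mod_lt _ p.succ_pos⟩ : Fin (p + 1)),
    e (depth G r v) v)
  have hmod : ∀ {x y}, c x = c y → depth G r x % (p + 1) = depth G r y % (p + 1) := fun h =>
    congrArg (fun q => (q.1 : ℕ)) h
  intro S hS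
  obtain ⟨u, huS, hu⟩ := S.exists_min_image (depth G r) (toFinite S)
    (let ⟨x⟩ := hS.nonempty; ⟨x.1, x.2⟩)
  by_cases hspan : ∃ v ∈ S, depth G r u + p ≤ depth G r v + 1
  · obtain ⟨v, hvS, hv⟩ := hspan
    have hlayer : ∀ i < p, ∃ w ∈ S, depth G r w = depth G r u + i := fun i hi =>
      have ⟨w, hw⟩ := (hS.preconnected ⟨u, huS⟩ ⟨v, hvS⟩).exists_apply_eq
        (f := fun x : S => depth G r x) (fun _ _ h => depth_le_of_adj hG h) le_self_add
        (by simp only; omega)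
      ⟨w, w.2, hw⟩
    have : Nonempty V := ⟨u⟩
    choose! w hwS hwd using hlayer
    refine Or.inr ((ncard_Iio_nat p).symm.le.trans (ncard_le_ncard_of_injOn (c ∘ w)
      (fun i hi => mem_image_of_mem c (hwS i hi)) (fun i hi j hj hij => ?_) (toFinite _)))
    have := hmod hij
    rw [hwd i hi, hwd j hj] at this
    have := Nat.eq_of_mod_eq_of_lt_add this (by simp only [mem_Iio] at hi hj; omega)
      (by simp only [mem_Iio] at hi hj; omega)
    omega
  · simp only [not_exists, not_and, not_le] at hspan
    set a := depth G r u
    have hT := connected_induce_inter_depth_eq hG hS hu ⟨u, huS, rfl⟩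
    have hcT : IsCenteredOn p c (S ∩ {v | depth G r v = a}) :=
      IsCenteredOn.of_comp (f := Prod.snd)
        (((he a).isCenteredOn inter_subset_right hT).congr fun v hv => by simp [c, hv.2.symm])
    refine hcT.of_subset inter_subset_left fun x hx y hy hxy => ⟨hy, ?_⟩
    have hya : depth G r y % (p + 1) = a % (p + 1) := hx.2 ▸ hmod hxy
    have := hu y hy
    have := hspan y hy
    exact Nat.eq_of_mod_eq_of_lt_add hya (by omega) (by omega)

end Layers

theorem exists_isCenteredColoring_of_isKTree (p t : ℕ) :
    ∃ M, 0 < M ∧ ∀ (V : Type u) [Finite V] (H : SimpleGraph V), IsKTree t H →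
      ∃ c : V → Fin M, IsCenteredColoring p H c := by
  induction t with
  | zero =>
    refine ⟨1, one_pos, fun V _ H hH => ⟨fun _ => 0, fun S hS => Or.inl ?_⟩⟩
    obtain ⟨⟨x, hx⟩⟩ := hS.nonempty
    refine ⟨x, hx, fun y hy _ => ?_⟩
    have := hS.preconnected ⟨y, hy⟩ ⟨x, hx⟩
    rw [hH.eq_bot, induce_bot, reachable_bot] at this
    exact congrArg Subtype.val this
  | succ k ih =>
    obtain ⟨M, hM, hcol⟩ := ih
    have : Nonempty (Fin M) := ⟨⟨0, hM⟩⟩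
    refine ⟨(p + 1) * M, by positivity, fun V _ H ⟨r, hr, hH⟩ => ?_⟩
    have : IsWellFounded V r := ⟨Finite.wellFounded_of_trans_of_irrefl r⟩
    have hlayer : ∀ a, ∃ e : V → Fin M,
        IsCenteredColoring p (H.induce {v | depth H r v = a}) (e ∘ Subtype.val) := fun a =>
      have ⟨_, hd⟩ := hcol _ _ (isKTree_induce_depth_eq (fun x => (hH x).1) (fun x => (hH x).2) a)
      hd.exists_extend
    choose e he using hlayer
    exact ⟨_, (isCenteredColoring_depth (fun x => (hH x).1) e he).comp_equiv finProdFinEquiv⟩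

theorem exists_isCenteredColoring_of_treeWidth_le (p t : ℕ) :
    ∃ M, 0 < M ∧ ∀ (V : Type u) [Fintype V] (G : SimpleGraph V), treeWidth G ≤ t →
      ∃ c : V → Fin M, IsCenteredColoring p G c := by
  obtain ⟨M, hM, hcol⟩ := exists_isCenteredColoring_of_isKTree.{u} p t
  refine ⟨M, hM, fun V _ G hG => ?_⟩
  obtain ⟨H, hGH, hH⟩ := exists_isKTree_of_treeWidth_le hG
  obtain ⟨c, hc⟩ := hcol V H hH
  exact ⟨c, hc.mono hGH⟩

/-- A class with low tree-width colorings has bounded `p`-centered colorings. -/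
theorem stmt5 (C : GraphClass) (h : HasLowTreeWidthColorings C) (p : ℕ) :
    ∃ X : ℕ, ∀ (V : Type) [Fintype V], ∀ G : SimpleGraph V, C V G →
      ∃ c : V → Fin X, IsCenteredColoring p G c := by
  obtain ⟨N, hN⟩ := h (p + 1) (Nat.le_add_left 1 p)
  obtain ⟨M, hM, hcol⟩ := exists_isCenteredColoring_of_treeWidth_le p (p - 2)
  have : Nonempty (Fin M) := ⟨⟨0, hM⟩⟩
  refine ⟨Fintype.card (Fin N × ({I : Finset (Fin N) // I.card < p} → Fin M)), fun V _ G hG => ?_⟩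
  obtain ⟨c, hc⟩ := hN V G hG
  have hI : ∀ I : {I : Finset (Fin N) // I.card < p}, ∃ e : V → Fin M,
      IsCenteredColoring p (G.induce {v | c v ∈ I.1}) (e ∘ Subtype.val) := by
    rintro ⟨I, hI⟩
    have hK : ∀ K : (G.induce {v | c v ∈ I}).ConnectedComponent, ∃ e : _ → Fin M,
        IsCenteredColoring p ((G.induce {v | c v ∈ I}).induce K.supp) (e ∘ Subtype.val) :=
      fun K =>
        have ⟨_, hd⟩ := hcol _ _ ((hc I (by omega) K).trans (by omega))
        hd.exists_extend
    choose e he using hK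
    exact (IsCenteredColoring.of_connectedComponent e he).exists_extend
  choose e he using hI
  exact ⟨_, (isCenteredColoring_prod_of_forall_card_lt c e he).comp_equiv (Fintype.equivFin _)⟩
end

section
/- Let G⃗ be a directed graph with maximum indegree Δ⁻(G⃗), let a, b be integers, and let Λ⃗ be an (a,b)-augmentation of G⃗. Then there exists an arc coloring of G⃗ using at most (2Δ⁻(Λ⃗) + 1) · Δ⁻(G⃗) colors such that whenever P⃗_1 is a directed path from a vertex x to a vertex z and P⃗_2 is a directed path from a vertex y to z, with no internal vertex or arc of P⃗_1 belonging to P⃗_2 and vice versa, and P⃗_1 has at most a+1 arcs and P⃗_2 has at most b+1 arcs, all the arcs of P⃗_1 ∪ P⃗_2 receive different colors. -/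
open scoped Classical

universe u v

/-!
Colour the arc `(u, v)` by the pair (colour of its head `v`, position of `u` among the
in-neighbours of `v`). Arcs with the same head differ in the second component. Two arcs of a
path pair with distinct heads `v ≠ v'` yield an `(a, b)`-reachability between `v` and `v'`:
inside one path, the subpath joining the two heads avoids the first vertex; across the two
paths, the suffixes starting at `v` and `v'` still meet in `z`. Either way `v` and `v'` are
adjacent in the graph underlying `Λ`, whose subgraphs all have average degree at most
`2Δ⁻(Λ)`, so it is greedily `(2Δ⁻(Λ) + 1)`-colourable and the first components differ.
-/

section Lists

variable {α : Type*}

theorem mem_listArcs_iff {l : List α} {u v : α} : (u, v) ∈ listArcs l ↔ [u, v] <:+: l := by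
  induction l with
  | nil => simp [listArcs]
  | cons a l ih =>
    cases l with
    | nil =>
      simp only [listArcs, List.tail_cons, List.zip_nil_right, List.not_mem_nil, false_iff]
      intro h
      simpa using h.length_le
    | cons b l =>
      rw [show listArcs (a :: b :: l) = (a, b) :: listArcs (b :: l) from rfl, List.mem_cons, ih,
        List.infix_cons_iff (a := a)]
      simp

theorem mem_tail_of_mem_listArcs {l : List α} {u v : α} (h : (u, v) ∈ listArcs l) :
    v ∈ l.tail :=
  (List.of_mem_zip h).2

theorem List.IsInfix.listArcs_subset {l₁ l₂ : List α} (h : l₁ <:+: l₂) :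
    listArcs l₁ ⊆ listArcs l₂ := by
  rintro ⟨u, v⟩ he
  rw [mem_listArcs_iff] at he ⊢
  exact he.trans h

theorem List.Sublist.internalVerts {l₁ l₂ : List α} (h : List.Sublist l₁ l₂) :
    List.Sublist (internalVerts l₁) (internalVerts l₂) := by
  rw [_root_.internalVerts, _root_.internalVerts, ← List.reverse_sublist, ← List.tail_reverse,
    ← List.tail_reverse]
  exact (List.reverse_sublist.2 h.tail).tail

theorem getLast_notMem_internalVerts {l : List α} {q : α} (hl : l.Nodup)
    (hq : l.getLast? = some q) : q ∉ internalVerts l := by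
  intro h
  rw [internalVerts, ← List.tail_dropLast] at h
  rw [← List.dropLast_append_getLast? q hq, List.nodup_append] at hl
  exact hl.2.2 q (List.mem_of_mem_tail h) q (List.mem_singleton_self q) rfl

theorem List.exists_infix_head?_getLast? {l : List α} {a b : α} (ha : a ∈ l) (hb : b ∈ l) :
    ∃ m, m <:+: l ∧ (m.head? = some a ∧ m.getLast? = some b ∨
      m.head? = some b ∧ m.getLast? = some a) := by
  obtain ⟨s, t, rfl⟩ := List.append_of_mem ha
  simp only [List.mem_append, List.mem_cons] at hb
  rcases hb with hb | rfl | hb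
  · obtain ⟨s₁, s₂, rfl⟩ := List.append_of_mem hb
    exact ⟨b :: s₂ ++ [a], ⟨s₁, t, by simp⟩, Or.inr ⟨rfl, List.getLast?_concat⟩⟩
  · exact ⟨[b], ⟨s, t, by simp⟩, Or.inl ⟨rfl, rfl⟩⟩
  · obtain ⟨t₁, t₂, rfl⟩ := List.append_of_mem hb
    exact ⟨a :: t₁ ++ [b], ⟨s, t₂, by simp⟩, Or.inl ⟨rfl, List.getLast?_concat⟩⟩

theorem SeparatedPair.symm {l₁ l₂ : List α} (h : SeparatedPair l₁ l₂) : SeparatedPair l₂ l₁ :=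
  ⟨h.2.1, h.1, fun e he₂ he₁ => h.2.2 e he₁ he₂⟩

theorem SeparatedPair.of_infix {l₁ l₂ m₁ m₂ : List α} (h : SeparatedPair l₁ l₂)
    (h₁ : m₁ <:+: l₁) (h₂ : m₂ <:+: l₂) : SeparatedPair m₁ m₂ :=
  ⟨fun v hv hv₂ => h.1 v (h₁.sublist.internalVerts.subset hv) (h₂.subset hv₂),
    fun v hv hv₁ => h.2.1 v (h₂.sublist.internalVerts.subset hv) (h₁.subset hv₁),
    fun e he₁ he₂ => h.2.2 e (h₁.listArcs_subset he₁) (h₂.listArcs_subset he₂)⟩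

theorem separatedPair_singleton {l : List α} {q : α} (hl : l.Nodup)
    (hq : l.getLast? = some q) : SeparatedPair l [q] :=
  ⟨fun v hv hvq => getLast_notMem_internalVerts hl hq (List.eq_of_mem_singleton hvq ▸ hv),
    by simp [internalVerts], by simp [listArcs]⟩

end Lists

section Paths

variable {V : Type*} {D : Digr V} {a b : ℕ}

theorem IsDiPath.adj_of_mem_listArcs {l : List V} (h : IsDiPath D l) {u v : V}
    (he : (u, v) ∈ listArcs l) : D.Adj u v := by
  simpa using h.2.2.infix (mem_listArcs_iff.1 he)

theorem IsDiPath.diPathBetween_of_infix {l m : List V} {p q : V} (h : IsDiPath D l)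
    (hm : m <:+: l) (hp : m.head? = some p) (hq : m.getLast? = some q) :
    DiPathBetween D m p q :=
  ⟨⟨by rintro rfl; simp at hp, h.2.1.sublist hm.sublist, h.2.2.infix hm⟩, hp, hq⟩

theorem diPathBetween_singleton (q : V) : DiPathBetween D [q] q q :=
  ⟨⟨by simp, List.nodup_singleton q, List.isChain_singleton q⟩, rfl, rfl⟩

theorem ABReachable.swap {x y : V} (h : ABReachable D a b x y) : ABReachable D b a y x := by
  obtain ⟨hxy, z, l₁, l₂, h₁, h₂, hl₁, hl₂, hsep⟩ := h
  exact ⟨hxy.symm, z, l₂, l₁, h₂, h₁, hl₂, hl₁, hsep.symm⟩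

theorem DiPathBetween.abReachable {S : List V} {p q : V} (hS : DiPathBetween D S p q)
    (hpq : p ≠ q) (hlen : S.length ≤ a + 1) : ABReachable D a b p q :=
  ⟨hpq, q, S, [q], hS, diPathBetween_singleton q, hlen, by simp,
    separatedPair_singleton hS.1.2.1 hS.2.2⟩

theorem DiPathBetween.exists_suffix {l : List V} {x z v : V} (h : DiPathBetween D l x z)
    (hv : v ∈ l.tail) : ∃ m, m <:+: l ∧ m.length < l.length ∧ DiPathBetween D m v z := by
  obtain ⟨s, t, hst⟩ := List.append_of_mem hv
  obtain ⟨w, l, rfl⟩ := List.exists_cons_of_ne_nil h.1.1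
  simp only [List.tail_cons] at hst
  subst hst
  have hsuf : v :: t <:+ w :: (s ++ v :: t) := ⟨w :: s, by simp⟩
  refine ⟨v :: t, hsuf.isInfix, by simp, h.1.diPathBetween_of_infix hsuf.isInfix rfl ?_⟩
  rw [← h.2.2]
  simp [List.getLast?_cons]

theorem IsDiPath.abReachable_of_mem_tail {l : List V} {v v' : V}
    (h : IsDiPath D l) (hlen : l.length ≤ a + 2) (hv : v ∈ l.tail) (hv' : v' ∈ l.tail)
    (hvv : v ≠ v') : ABReachable D a b v v' ∨ ABReachable D a b v' v := by
  obtain ⟨m, hm, hends⟩ := List.exists_infix_head?_getLast? hv hv'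
  have hml : m <:+: l := hm.trans (List.tail_suffix l).isInfix
  have hlen' : m.length ≤ a + 1 := by
    have := hm.length_le
    simp only [List.length_tail] at this
    omega
  rcases hends with ⟨hp, hq⟩ | ⟨hp, hq⟩
  · exact Or.inl ((h.diPathBetween_of_infix hml hp hq).abReachable hvv hlen')
  · exact Or.inr ((h.diPathBetween_of_infix hml hp hq).abReachable hvv.symm hlen')

theorem SeparatedPair.abReachable_of_mem_tail {l₁ l₂ : List V} {x y z v v' : V}
    (hsep : SeparatedPair l₁ l₂) (h₁ : DiPathBetween D l₁ x z) (h₂ : DiPathBetween D l₂ y z)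
    (hlen₁ : l₁.length ≤ a + 2) (hlen₂ : l₂.length ≤ b + 2) (hv : v ∈ l₁.tail)
    (hv' : v' ∈ l₂.tail) (hvv : v ≠ v') : ABReachable D a b v v' := by
  obtain ⟨m₁, hm₁, hlm₁, hp₁⟩ := h₁.exists_suffix hv
  obtain ⟨m₂, hm₂, hlm₂, hp₂⟩ := h₂.exists_suffix hv'
  exact ⟨hvv, z, m₁, m₂, hp₁, hp₂, by omega, by omega, hsep.of_infix hm₁ hm₂⟩

theorem abReachable_or_of_mem_listArcs {l₁ l₂ : List V} {x y z u v u' v' : V}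
    (hsep : SeparatedPair l₁ l₂) (h₁ : DiPathBetween D l₁ x z) (h₂ : DiPathBetween D l₂ y z)
    (hlen₁ : l₁.length ≤ a + 2) (hlen₂ : l₂.length ≤ b + 2)
    (he : (u, v) ∈ listArcs l₁ ++ listArcs l₂) (hf : (u', v') ∈ listArcs l₁ ++ listArcs l₂)
    (hvv : v ≠ v') : ABReachable D a b v v' ∨ ABReachable D a b v' v := by
  rcases List.mem_append.1 he with he | he <;> rcases List.mem_append.1 hf with hf | hf <;>
    replace he := mem_tail_of_mem_listArcs he <;> replace hf := mem_tail_of_mem_listArcs hf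
  · exact h₁.1.abReachable_of_mem_tail hlen₁ he hf hvv
  · exact Or.inl (hsep.abReachable_of_mem_tail h₁ h₂ hlen₁ hlen₂ he hf hvv)
  · exact Or.inr (hsep.symm.abReachable_of_mem_tail h₂ h₁ hlen₂ hlen₁ he hf hvv).swap
  · exact ((h₂.1.abReachable_of_mem_tail hlen₂ he hf hvv).imp ABReachable.swap
      ABReachable.swap).symm

end Paths

section Coloring

variable {V : Type*} [Fintype V] (R : V → V → Prop)

theorem card_filter_le_inDegMax (S : Finset V) (y : V) :
    (S.filter (R · y)).card ≤ inDegMax R :=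
  (Finset.card_le_card (Finset.filter_subset_filter _ (Finset.subset_univ S))).trans
    (Finset.le_sup (f := fun y => (Finset.univ.filter fun x => R x y).card) (Finset.mem_univ y))

theorem exists_inNeighbor_numbering : ∃ ν : V → V → ℕ, (∀ p q, R p q → ν p q < inDegMax R) ∧
    ∀ p p' q, R p q → R p' q → ν p q = ν p' q → p = p' := by
  refine ⟨fun p q => List.idxOf p (Finset.univ.filter (R · q)).toList, fun p q h => ?_,
    fun p p' q h _ heq => (List.idxOf_inj (by simp [h])).1 heq⟩
  calc List.idxOf p (Finset.univ.filter (R · q)).toList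
      < (Finset.univ.filter (R · q)).toList.length := List.idxOf_lt_length_iff.2 (by simp [h])
    _ ≤ inDegMax R := by
      rw [Finset.length_toList]
      exact card_filter_le_inDegMax R _ q

theorem exists_card_filter_fromRel_adj_le {S : Finset V} (hS : S.Nonempty) :
    ∃ p ∈ S, (S.filter ((SimpleGraph.fromRel R).Adj p)).card ≤ 2 * inDegMax R := by
  apply Finset.exists_le_of_sum_le hS
  calc ∑ p ∈ S, (S.filter ((SimpleGraph.fromRel R).Adj p)).card
      ≤ ∑ p ∈ S, ((S.filter (R p ·)).card + (S.filter (R · p)).card) := by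
        refine Finset.sum_le_sum fun p _ => ?_
        calc (S.filter ((SimpleGraph.fromRel R).Adj p)).card
            ≤ (S.filter fun q => R p q ∨ R q p).card :=
              Finset.card_le_card fun q => by
                simp only [Finset.mem_filter, SimpleGraph.fromRel_adj]
                tauto
          _ ≤ _ := by
              rw [Finset.filter_or]
              exact Finset.card_union_le _ _
    _ = ∑ p ∈ S, ((S.filter (R · p)).card + (S.filter (R · p)).card) := by
        rw [Finset.sum_add_distrib, Finset.sum_add_distrib]
        congr 1
        exact Finset.sum_card_bipartiteAbove_eq_sum_card_bipartiteBelow R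
    _ ≤ ∑ _p ∈ S, 2 * inDegMax R :=
        Finset.sum_le_sum fun p _ => by linarith [card_filter_le_inDegMax R S p]

theorem exists_coloring_fromRel_on (S : Finset V) : ∃ c : V → ℕ,
    (∀ v ∈ S, c v ≤ 2 * inDegMax R) ∧
    ∀ x ∈ S, ∀ y ∈ S, (SimpleGraph.fromRel R).Adj x y → c x ≠ c y := by
  induction S using Finset.strongInduction with
  | H S ih =>
    set G := SimpleGraph.fromRel R
    rcases S.eq_empty_or_nonempty with rfl | hS
    · exact ⟨fun _ => 0, by simp, by simp⟩
    obtain ⟨p, hp, hdeg⟩ := exists_card_filter_fromRel_adj_le R hS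
    obtain ⟨c, hc, hcG⟩ := ih (S.erase p) (Finset.erase_ssubset hp)
    have hused : (((S.erase p).filter (G.Adj p)).image c).card <
        (Finset.range (2 * inDegMax R + 1)).card := by
      rw [Finset.card_range, Nat.lt_succ_iff]
      calc _ ≤ ((S.erase p).filter (G.Adj p)).card := Finset.card_image_le
        _ ≤ (S.filter (G.Adj p)).card :=
          Finset.card_le_card (Finset.filter_subset_filter _ (Finset.erase_subset p S))
        _ ≤ 2 * inDegMax R := hdeg
    obtain ⟨m, hm, hmT⟩ := Finset.exists_mem_notMem_of_card_lt_card hused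
    have hfree : ∀ w ∈ S, G.Adj p w → m ≠ c w := fun w hw hpw hmw =>
      hmT (Finset.mem_image.2 ⟨w, Finset.mem_filter.2 ⟨Finset.mem_erase.2 ⟨hpw.ne', hw⟩, hpw⟩,
        hmw.symm⟩)
    refine ⟨Function.update c p m, fun v hv => ?_, fun x hx y hy hxy => ?_⟩
    · rcases eq_or_ne p v with rfl | hvp
      · simpa [Nat.lt_succ_iff] using hm
      · rw [Function.update_of_ne hvp.symm]
        exact hc v (Finset.mem_erase.2 ⟨hvp.symm, hv⟩)
    · rcases eq_or_ne p x with rfl | hxp <;> rcases eq_or_ne p y with rfl | hyp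
      · exact absurd hxy (G.loopless.irrefl p)
      · simpa [Function.update_of_ne hyp.symm] using hfree y hy hxy
      · simpa [Function.update_of_ne hxp.symm] using (hfree x hx hxy.symm).symm
      · simpa [Function.update_of_ne hxp.symm, Function.update_of_ne hyp.symm] using
          hcG x (Finset.mem_erase.2 ⟨hxp.symm, hx⟩) y (Finset.mem_erase.2 ⟨hyp.symm, hy⟩) hxy

theorem colorable_fromRel : (SimpleGraph.fromRel R).Colorable (2 * inDegMax R + 1) := by
  obtain ⟨c, hc, hcG⟩ := exists_coloring_fromRel_on R Finset.univ
  exact (SimpleGraph.colorable_iff_exists_bdd_nat_coloring _).2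
    ⟨SimpleGraph.Coloring.mk c fun hxy => hcG _ (Finset.mem_univ _) _ (Finset.mem_univ _) hxy,
      fun v => Nat.lt_succ_of_le (hc v (Finset.mem_univ v))⟩

end Coloring

theorem Nat.eq_and_eq_of_mul_add_eq_mul_add {p q n₁ n₂ M : ℕ} (h₁ : n₁ < M) (h₂ : n₂ < M)
    (h : p * M + n₁ = q * M + n₂) : p = q ∧ n₁ = n₂ := by
  have hn : n₁ = n₂ := by
    rw [← Nat.mul_add_mod_of_lt h₁, h, Nat.mul_add_mod_of_lt h₂]
  subst hn
  exact ⟨Nat.eq_of_mul_eq_mul_right (by omega) (Nat.add_right_cancel h), rfl⟩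

/-- Existence of an arc coloring separating the arcs of internally disjoint path pairs. -/
theorem stmt12 {V : Type} [Fintype V] (D : Digr V) (a b : ℕ) (L : V → V → Prop)
    (hL : IsAugmentation D a b L) :
    ∃ φ : V × V → ℕ,
      (∀ x y, D.Adj x y → φ (x, y) < (2 * inDegMax L + 1) * inDegMax D.Adj) ∧
      ∀ (x y z : V) (l1 l2 : List V),
        DiPathBetween D l1 x z → DiPathBetween D l2 y z →
        l1.length ≤ a + 2 → l2.length ≤ b + 2 → SeparatedPair l1 l2 →
        ∀ e ∈ listArcs l1 ++ listArcs l2, ∀ f ∈ listArcs l1 ++ listArcs l2,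
          e ≠ f → φ e ≠ φ f := by
  obtain ⟨c, hc⟩ := (SimpleGraph.colorable_iff_exists_bdd_nat_coloring _).1 (colorable_fromRel L)
  obtain ⟨ν, hν, hν_inj⟩ := exists_inNeighbor_numbering D.Adj
  refine ⟨fun e => c e.2 * inDegMax D.Adj + ν e.1 e.2, fun u v huv => ?_, ?_⟩
  · calc c v * inDegMax D.Adj + ν u v < (c v + 1) * inDegMax D.Adj := by
          linarith [hν u v huv]
      _ ≤ (2 * inDegMax L + 1) * inDegMax D.Adj := Nat.mul_le_mul_right _ (hc v)
  rintro x y z l₁ l₂ h₁ h₂ hlen₁ hlen₂ hsep ⟨u, v⟩ he ⟨u', v'⟩ hf hef heq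
  dsimp only at heq
  have hadj : ∀ {u v}, (u, v) ∈ listArcs l₁ ++ listArcs l₂ → D.Adj u v := fun h =>
    (List.mem_append.1 h).elim h₁.1.adj_of_mem_listArcs h₂.1.adj_of_mem_listArcs
  obtain ⟨hcv, hνv⟩ :=
    Nat.eq_and_eq_of_mul_add_eq_mul_add (hν _ _ (hadj he)) (hν _ _ (hadj hf)) heq
  by_cases hvv : v = v'
  · subst hvv
    exact hef (by rw [hν_inj u u' v (hadj he) (hadj hf) hνv])
  · refine c.valid ?_ hcv
    rw [SimpleGraph.fromRel_adj]
    exact ⟨hvv, (abReachable_or_of_mem_listArcs hsep h₁ h₂ hlen₁ hlen₂ he hf hvv).elim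
      (hL v v') (fun h => (hL v' v h).symm)⟩
end
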